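/- Theorem 1 (measure form): let Σ_anc := Σ₁ + Σ₁ Σ₂⁻¹ Σ₁ and Σ_post := (Σ₁⁻¹ + Σ₂⁻¹)⁻¹, both of which are positive definite. Then the pushforward of the multivariate Gaussian measure N(μ₁, Σ_anc) on ℝ^d (equivalently, on EuclideanSpace ℝ (Fin d)) under the affine map y ↦ Σ_post Σ₁⁻¹ y + Σ_post Σ₂⁻¹ μ₂ equals the multivariate Gaussian measure N(μ_post, Σ_post), where μ_post := Σ_post Σ₂⁻¹ μ₂ + Σ_post Σ₁⁻¹ μ₁. In words: if anchor points are sampled with mean μ_anc = μ₁ and covariance Σ_anc = Σ₁ + Σ₁ Σ₂⁻¹ Σ₁, then the distribution of the (affine) MAP solutions equals the Bayesian posterior N(μ_post, Σ_post). -/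

import Mathlib

open Matrix MeasureTheory

/-- Multivariate Gaussian density with mean `μ` and covariance `S`. -/
noncomputable def gaussianPdf {d : ℕ} (μ : Fin d → ℝ) (S : Matrix (Fin d) (Fin d) ℝ)
    (x : Fin d → ℝ) : ℝ :=
  ((2 * Real.pi) ^ d * S.det) ^ (-(1/2 : ℝ)) *
    Real.exp (-(1/2 : ℝ) * ((x - μ) ⬝ᵥ (S⁻¹ *ᵥ (x - μ))))

/-- Multivariate Gaussian measure `N(μ, S)` on `EuclideanSpace ℝ (Fin d)`. -/
noncomputable def gaussianMeasure {d : ℕ} (μ : Fin d → ℝ) (S : Matrix (Fin d) (Fin d) ℝ) :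
    Measure (EuclideanSpace ℝ (Fin d)) :=
  volume.withDensity fun x => ENNReal.ofReal (gaussianPdf μ S x)

/-! The pushforward of `N(μ, S)` along an invertible affine map `y ↦ A y + b` is
`N(A μ + b, A S Aᵀ)`: by change of variables its density at `x` is `|det A|⁻¹` times the density
of `N(μ, S)` at `A⁻¹ (x - b)`. For `A = Σ_post Σ₁⁻¹` the anchor covariance factors as
`Σ_anc = Σ₁ Σ_post⁻¹ Σ₁`, so `A Σ_anc Aᵀ = Σ_post`, while `A μ₁ + b = μ_post` by definition. -/

open scoped ENNReal

theorem MeasurableEquiv.map_withDensity_comp {α β : Type*} [MeasurableSpace α]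
    [MeasurableSpace β] (e : α ≃ᵐ β) (μ : Measure α) (f : β → ℝ≥0∞) :
    (μ.withDensity (f ∘ e)).map e = (μ.map e).withDensity f := by
  ext s hs
  rw [e.map_apply, withDensity_apply _ (e.measurable hs), withDensity_apply _ hs, e.restrict_map,
    lintegral_map_equiv]
  rfl

namespace Matrix

variable {n : Type*} [Fintype n] [DecidableEq n]

noncomputable def euclideanAffineEquiv (A : Matrix n n ℝ) (hA : IsUnit A.det) (b : n → ℝ) :
    EuclideanSpace ℝ n ≃ᵐ EuclideanSpace ℝ n where
  toFun y := WithLp.toLp 2 (A *ᵥ y + b)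
  invFun x := WithLp.toLp 2 (A⁻¹ *ᵥ (x - b))
  left_inv y := by simp [mulVec_mulVec, nonsing_inv_mul A hA]
  right_inv x := by simp [mulVec_mulVec, mul_nonsing_inv A hA]
  measurable_toFun :=
    (by fun_prop : Continuous fun y : EuclideanSpace ℝ n => WithLp.toLp 2 (A *ᵥ y + b)).measurable
  measurable_invFun :=
    (by fun_prop : Continuous fun x : EuclideanSpace ℝ n =>
      WithLp.toLp 2 (A⁻¹ *ᵥ (x - b))).measurable

theorem map_euclideanAffineEquiv_volume (A : Matrix n n ℝ) (hA : IsUnit A.det) (b : n → ℝ) :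
    (volume : Measure (EuclideanSpace ℝ n)).map (euclideanAffineEquiv A hA b)
      = ENNReal.ofReal |A.det|⁻¹ • volume := by
  have hdet : LinearMap.det (toLpLin 2 2 A) ≠ 0 := by
    rw [LinearMap.det_toLpLin]; exact hA.ne_zero
  have : ⇑(euclideanAffineEquiv A hA b) = (· + WithLp.toLp 2 b) ∘ toLpLin 2 2 A := rfl
  rw [this, ← Measure.map_map (measurable_add_const _)
      (toLpLin 2 2 A).continuous_of_finiteDimensional.measurable,
    Measure.map_linearMap_addHaar_eq_smul_addHaar volume hdet, Measure.map_smul,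
    map_add_right_eq_self volume, LinearMap.det_toLpLin, abs_inv]

theorem add_mul_inv_mul_eq_mul_add_inv_mul {K : Type*} [Field K] (S₁ S₂ : Matrix n n K)
    (hS₁ : IsUnit S₁.det) : S₁ + S₁ * S₂⁻¹ * S₁ = S₁ * (S₁⁻¹ + S₂⁻¹) * S₁ := by
  rw [mul_add, add_mul, mul_nonsing_inv S₁ hS₁, one_mul]

theorem dotProduct_inv_mulVec_mul_mul_transpose (A S : Matrix n n ℝ) (v : n → ℝ) :
    v ⬝ᵥ ((A * S * Aᵀ)⁻¹ *ᵥ v) = (A⁻¹ *ᵥ v) ⬝ᵥ (S⁻¹ *ᵥ (A⁻¹ *ᵥ v)) := by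
  rw [mul_inv_rev, mul_inv_rev, ← transpose_nonsing_inv, ← mulVec_mulVec, ← mulVec_mulVec,
    dotProduct_mulVec, vecMul_transpose]

end Matrix

theorem Real.mul_sq_rpow_neg_half {c : ℝ} (hc : 0 ≤ c) (a : ℝ) :
    (c * a ^ 2) ^ (-(1/2 : ℝ)) = |a|⁻¹ * c ^ (-(1/2 : ℝ)) := by
  have : (a ^ 2) ^ (-(1/2 : ℝ)) = |a|⁻¹ := by
    rw [← sq_abs, ← Real.rpow_natCast, ← Real.rpow_mul (abs_nonneg a)]
    norm_num [Real.rpow_neg_one]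
  rw [Real.mul_rpow hc (sq_nonneg a), this, mul_comm]

theorem gaussianPdf_affine {d : ℕ} (A S : Matrix (Fin d) (Fin d) ℝ) (hA : IsUnit A.det)
    (hS : 0 ≤ S.det) (μ b x : Fin d → ℝ) :
    gaussianPdf (A *ᵥ μ + b) (A * S * Aᵀ) x = |A.det|⁻¹ * gaussianPdf μ S (A⁻¹ *ᵥ (x - b)) := by
  have hshift : A⁻¹ *ᵥ (x - b) - μ = A⁻¹ *ᵥ (x - (A *ᵥ μ + b)) := by
    rw [sub_add_eq_sub_sub_swap, mulVec_sub _ (x - b), mulVec_mulVec, nonsing_inv_mul A hA,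
      one_mulVec]
  have hdet : (2 * Real.pi) ^ d * (A * S * Aᵀ).det = (2 * Real.pi) ^ d * S.det * A.det ^ 2 := by
    rw [det_mul, det_mul, det_transpose]; ring
  rw [gaussianPdf, gaussianPdf, hshift, ← dotProduct_inv_mulVec_mul_mul_transpose, hdet,
    Real.mul_sq_rpow_neg_half (by positivity), mul_assoc]

theorem map_gaussianMeasure_affine {d : ℕ} (A S : Matrix (Fin d) (Fin d) ℝ) (hA : IsUnit A.det)
    (hS : 0 ≤ S.det) (μ b : Fin d → ℝ) :
    (gaussianMeasure μ S).map (fun y : EuclideanSpace ℝ (Fin d) => WithLp.toLp 2 (A *ᵥ y + b))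
      = gaussianMeasure (A *ᵥ μ + b) (A * S * Aᵀ) := by
  set e := euclideanAffineEquiv A hA b
  have hdensity : (fun y : EuclideanSpace ℝ (Fin d) => ENNReal.ofReal (gaussianPdf μ S y))
      = (fun x => ENNReal.ofReal (gaussianPdf μ S (e.symm x))) ∘ e := by
    ext y; simp
  change (gaussianMeasure μ S).map e = _
  rw [gaussianMeasure, hdensity, e.map_withDensity_comp, map_euclideanAffineEquiv_volume,
    withDensity_smul_measure, ← withDensity_smul' _ _ ENNReal.ofReal_ne_top, gaussianMeasure]
  congr 1
  ext x
  rw [gaussianPdf_affine A S hA hS, Pi.smul_apply, smul_eq_mul,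
    ENNReal.ofReal_mul (inv_nonneg.2 (abs_nonneg _))]
  rfl

theorem stmt_6_general (d : ℕ) (S1 S2 : Matrix (Fin d) (Fin d) ℝ)
    (μ₁ μ₂ : Fin d → ℝ)
    (hS1 : S1.PosDef)
    (hS2 : S2.PosDef)
    (Sanc : Matrix (Fin d) (Fin d) ℝ) (hSanc : Sanc = S1 + S1 * S2⁻¹ * S1)
    (Spost : Matrix (Fin d) (Fin d) ℝ) (hSpost : Spost = (S1⁻¹ + S2⁻¹)⁻¹)
    (μpost : Fin d → ℝ) (hμpost : μpost = (Spost * S2⁻¹) *ᵥ μ₂ + (Spost * S1⁻¹) *ᵥ μ₁) :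
    Sanc.PosDef ∧ Spost.PosDef ∧
      Measure.map
          (fun y : EuclideanSpace ℝ (Fin d) =>
            (WithLp.toLp 2 ((Spost * S1⁻¹) *ᵥ y + (Spost * S2⁻¹) *ᵥ μ₂) : EuclideanSpace ℝ (Fin d)))
          (gaussianMeasure μ₁ Sanc)
        = gaussianMeasure μpost Spost := by
  have hprec : (S1⁻¹ + S2⁻¹).PosDef := hS1.inv.add hS2.inv
  have hSancPD : Sanc.PosDef := by
    have h := hS2.inv.posSemidef.mul_mul_conjTranspose_same S1
    rw [hS1.isHermitian.eq] at h
    exact hSanc ▸ hS1.add_posSemidef h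
  have hSpostPD : Spost.PosDef := hSpost ▸ hprec.inv
  refine ⟨hSancPD, hSpostPD, ?_⟩
  have hS1u : IsUnit S1.det := (isUnit_iff_isUnit_det S1).1 hS1.isUnit
  have hSpostu : IsUnit Spost.det := (isUnit_iff_isUnit_det Spost).1 hSpostPD.isUnit
  have hAu : IsUnit (Spost * S1⁻¹).det := by
    rw [det_mul]; exact hSpostu.mul (isUnit_nonsing_inv_det S1 hS1u)
  have hcov : Spost * S1⁻¹ * Sanc * (Spost * S1⁻¹)ᵀ = Spost := by
    have hsymm {M : Matrix (Fin d) (Fin d) ℝ} (hM : M.PosDef) : Mᵀ = M :=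
      (isHermitian_iff_isSymm.1 hM.isHermitian).eq
    have hSpost_inv : S1⁻¹ + S2⁻¹ = Spost⁻¹ := by
      rw [hSpost, nonsing_inv_nonsing_inv _ ((isUnit_iff_isUnit_det _).1 hprec.isUnit)]
    rw [transpose_mul, hsymm hS1.inv, hsymm hSpostPD, hSanc,
      add_mul_inv_mul_eq_mul_add_inv_mul S1 S2 hS1u, hSpost_inv]
    simp only [Matrix.mul_assoc]
    rw [mul_nonsing_inv_cancel_left _ _ hS1u, nonsing_inv_mul_cancel_left _ _ hS1u,
      mul_nonsing_inv_cancel_left _ _ hSpostu]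
  rw [map_gaussianMeasure_affine _ Sanc hAu hSancPD.det_pos.le, hcov, hμpost, add_comm]

/-- Theorem 1 (measure form): with `Σ_anc := Σ₁ + Σ₁ Σ₂⁻¹ Σ₁` and
`Σ_post := (Σ₁⁻¹ + Σ₂⁻¹)⁻¹` (both positive definite), the pushforward of
`N(μ₁, Σ_anc)` under the affine MAP map `y ↦ Σ_post Σ₁⁻¹ y + Σ_post Σ₂⁻¹ μ₂`
equals the Bayesian posterior `N(μ_post, Σ_post)`, where
`μ_post := Σ_post Σ₂⁻¹ μ₂ + Σ_post Σ₁⁻¹ μ₁`. -/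
theorem stmt_6 (d : ℕ) (hd : 1 ≤ d) (S1 S2 : Matrix (Fin d) (Fin d) ℝ)
    (μ₁ μ₂ : Fin d → ℝ)
    (hS1sym : S1.IsSymm) (hS1 : S1.PosDef)
    (hS2sym : S2.IsSymm) (hS2 : S2.PosDef)
    (Sanc : Matrix (Fin d) (Fin d) ℝ) (hSanc : Sanc = S1 + S1 * S2⁻¹ * S1)
    (Spost : Matrix (Fin d) (Fin d) ℝ) (hSpost : Spost = (S1⁻¹ + S2⁻¹)⁻¹)
    (μpost : Fin d → ℝ) (hμpost : μpost = (Spost * S2⁻¹) *ᵥ μ₂ + (Spost * S1⁻¹) *ᵥ μ₁) :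
    Sanc.PosDef ∧ Spost.PosDef ∧
      Measure.map
          (fun y : EuclideanSpace ℝ (Fin d) =>
            (WithLp.toLp 2 ((Spost * S1⁻¹) *ᵥ y + (Spost * S2⁻¹) *ᵥ μ₂) : EuclideanSpace ℝ (Fin d)))
          (gaussianMeasure μ₁ Sanc)
        = gaussianMeasure μpost Spost :=
  stmt_6_general d S1 S2 μ₁ μ₂ hS1 hS2 Sanc hSanc Spost hSpost μpost hμpost
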